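/- Let Q(x) = √2/cosh(x), L⁻ u = −u'' + u − Q² u, L⁺ u = −u'' + u − 3Q² u, and let ε ∈ ℝ. Suppose σ ∈ ℂ and V₁, V₂ are complex-valued Schwartz functions on ℝ satisfying σ V₁ = L⁻ V₂ + ε² V₂ and σ V₂ = −(L⁺ V₁ + ε² V₁). Then Re σ · ( ∫_ℝ (|V₁'|² + |V₁|² − 3Q²|V₁|²) dx + ∫_ℝ (|V₂'|² + |V₂|² − Q²|V₂|²) dx + ε² ∫_ℝ (|V₁|² + |V₂|²) dx ) = 0. -/

import Mathlib

/-!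
Write `p = ∫ conj V₂ · V₁`. Pairing the first equation with `V₂` and the second with `V₁`, and
integrating by parts, gives `σ p = B` and `σ p̄ = -A`, where `A` and `B` are the (real) quadratic
forms of `L⁺ + ε²` at `V₁` and of `L⁻ + ε²` at `V₂`. Hence `A + B = σ (p - p̄) = 2iσ Im p`; as this
is real, `Re σ · Im p = 0`, and then `Re σ · (A + B) = -2 Re σ · Im σ · Im p = 0`.
-/

open MeasureTheory

/-- The NLS ground state `Q(x) = √2 / cosh x`. -/
noncomputable def Q (x : ℝ) : ℝ := Real.sqrt 2 / Real.cosh x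

open ComplexConjugate

theorem Complex.re_mul_add_eq_zero_of_mul_eq_ofReal {σ p : ℂ} {a b : ℝ} (hb : σ * p = b)
    (ha : σ * conj p = -a) : σ.re * (a + b) = 0 := by
  have hb_re := congrArg Complex.re hb
  have hb_im := congrArg Complex.im hb
  have ha_re := congrArg Complex.re ha
  have ha_im := congrArg Complex.im ha
  simp only [Complex.mul_re, Complex.mul_im, Complex.conj_re, Complex.conj_im, Complex.neg_re,
    Complex.neg_im, Complex.ofReal_re, Complex.ofReal_im] at hb_re hb_im ha_re ha_im
  linear_combination -σ.re * hb_re + σ.re * ha_re - σ.im * hb_im + σ.im * ha_im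

namespace SchwartzMap

noncomputable def conjMul : ℂ →L[ℝ] ℂ →L[ℝ] ℂ :=
  (ContinuousLinearMap.mul ℝ ℂ).comp (Complex.conjCLE : ℂ →L[ℝ] ℂ)

@[simp]
theorem conjMul_apply (a b : ℂ) : conjMul a b = conj a * b := rfl

theorem coe_derivCLM {F : Type*} [NormedAddCommGroup F] [NormedSpace ℝ F] (f : 𝓢(ℝ, F)) :
    ⇑(derivCLM ℝ F f) = deriv f :=
  funext (derivCLM_apply ℝ f)

section Integrability

variable {E F : Type*} [NormedAddCommGroup E] [NormedSpace ℝ E] [MeasurableSpace E] [BorelSpace E]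
  {μ : Measure E} [μ.HasTemperateGrowth]

theorem integrable_conj_mul [SecondCountableTopology E] (f g : 𝓢(E, ℂ)) :
    Integrable (fun x ↦ conj (f x) * g x) μ :=
  (pairing conjMul f g).integrable

theorem integrable_norm_sq [NormedAddCommGroup F] [NormedSpace ℝ F]
    [SecondCountableTopologyEither E F] (f : 𝓢(E, F)) : Integrable (fun x ↦ ‖f x‖ ^ 2) μ :=
  (f.memLp 2 μ).integrable_norm_pow two_ne_zero

end Integrability

theorem integral_conj_mul_neg_iteratedDeriv_two (f : 𝓢(ℝ, ℂ)) :
    ∫ x, conj (f x) * -iteratedDeriv 2 f x = ((∫ x, ‖deriv f x‖ ^ 2 : ℝ) : ℂ) := by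
  have hibp := integral_bilinear_deriv_right_eq_neg_left f (derivCLM ℝ ℂ f) conjMul
  simp only [conjMul_apply, coe_derivCLM, Complex.conj_mul'] at hibp
  rw [iteratedDeriv_succ, iteratedDeriv_one, ← integral_complex_ofReal]
  simp only [mul_neg, integral_neg, hibp, neg_neg, Complex.ofReal_pow]

theorem integral_conj_mul_schrodinger (f : 𝓢(ℝ, ℂ)) {W : ℝ → ℝ} (hW : Continuous W) {C : ℝ}
    (hWC : ∀ x, |W x| ≤ C) (μ : ℝ) :
    ∫ x, conj (f x) * ((-iteratedDeriv 2 f x + f x - W x * f x) + μ * f x) =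
      (((∫ x, (‖deriv f x‖ ^ 2 + ‖f x‖ ^ 2 - W x * ‖f x‖ ^ 2)) + μ * ∫ x, ‖f x‖ ^ 2 : ℝ) : ℂ) := by
  have hkinetic : Integrable fun x ↦ conj (f x) * -iteratedDeriv 2 f x := by
    simpa [iteratedDeriv_succ, coe_derivCLM] using
      (integrable_conj_mul f (derivCLM ℝ ℂ (derivCLM ℝ ℂ f))).neg
  have hpotential : Integrable fun x ↦ ‖f x‖ ^ 2 - W x * ‖f x‖ ^ 2 :=
    (integrable_norm_sq f).sub <| (integrable_norm_sq f).bdd_mul hW.aestronglyMeasurable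
      (ae_of_all _ hWC)
  have hsplit : ∀ x, conj (f x) * ((-iteratedDeriv 2 f x + f x - W x * f x) + μ * f x) =
      conj (f x) * -iteratedDeriv 2 f x + ((‖f x‖ ^ 2 - W x * ‖f x‖ ^ 2 : ℝ) : ℂ)
        + μ * ((‖f x‖ ^ 2 : ℝ) : ℂ) := by
    intro x
    push_cast
    rw [← Complex.conj_mul']
    ring
  have hderiv : Integrable fun x ↦ ‖deriv f x‖ ^ 2 := by
    simpa [coe_derivCLM] using integrable_norm_sq (derivCLM ℝ ℂ f)
  have hpotentialℂ : Integrable fun x ↦ ((‖f x‖ ^ 2 - W x * ‖f x‖ ^ 2 : ℝ) : ℂ) :=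
    hpotential.ofReal
  have hsum : Integrable fun x ↦
      conj (f x) * -iteratedDeriv 2 f x + ((‖f x‖ ^ 2 - W x * ‖f x‖ ^ 2 : ℝ) : ℂ) :=
    hkinetic.add hpotentialℂ
  have hmass : Integrable fun x ↦ (μ : ℂ) * ((‖f x‖ ^ 2 : ℝ) : ℂ) :=
    (integrable_norm_sq f).ofReal.const_mul _
  have hreal : ∫ x, (‖deriv f x‖ ^ 2 + ‖f x‖ ^ 2 - W x * ‖f x‖ ^ 2) =
      (∫ x, ‖deriv f x‖ ^ 2) + ∫ x, (‖f x‖ ^ 2 - W x * ‖f x‖ ^ 2) := by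
    simp_rw [add_sub_assoc]
    exact integral_add hderiv hpotential
  simp_rw [hsplit]
  rw [integral_add hsum hmass, integral_add hkinetic hpotentialℂ, integral_const_mul,
    integral_complex_ofReal, integral_complex_ofReal, integral_conj_mul_neg_iteratedDeriv_two,
    hreal]
  push_cast
  ring

end SchwartzMap

theorem continuous_Q : Continuous Q :=
  continuous_const.div Real.continuous_cosh fun x ↦ (Real.cosh_pos x).ne'

theorem Q_sq_le_two (x : ℝ) : Q x ^ 2 ≤ 2 := by
  rw [Q, div_pow, Real.sq_sqrt zero_le_two]
  exact div_le_self zero_le_two (one_le_pow₀ (Real.one_le_cosh x))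

/-- Conservation law for the transverse eigenmode system of the cubic NLS:
if `σ V₁ = (L⁻ + ε²)V₂` and `σ V₂ = −(L⁺ + ε²)V₁` for Schwartz `V₁, V₂`, then
`Re σ · (⟨L⁺V₁,V₁⟩ + ⟨L⁻V₂,V₂⟩ + ε²(‖V₁‖² + ‖V₂‖²)) = 0`. -/
theorem nls_eigenmode_conservation_law (ε : ℝ) (σ : ℂ)
    (V₁ V₂ : SchwartzMap ℝ ℂ)
    (h₁ : ∀ x : ℝ, σ * V₁ x =
      (-iteratedDeriv 2 (⇑V₂) x + V₂ x - (Q x : ℂ) ^ 2 * V₂ x) + (ε : ℂ) ^ 2 * V₂ x)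
    (h₂ : ∀ x : ℝ, σ * V₂ x =
      -((-iteratedDeriv 2 (⇑V₁) x + V₁ x - 3 * (Q x : ℂ) ^ 2 * V₁ x) + (ε : ℂ) ^ 2 * V₁ x)) :
    σ.re * ((∫ x : ℝ, (‖deriv (⇑V₁) x‖ ^ 2 + ‖V₁ x‖ ^ 2 - 3 * (Q x) ^ 2 * ‖V₁ x‖ ^ 2))
      + (∫ x : ℝ, (‖deriv (⇑V₂) x‖ ^ 2 + ‖V₂ x‖ ^ 2 - (Q x) ^ 2 * ‖V₂ x‖ ^ 2))
      + ε ^ 2 * ∫ x : ℝ, (‖V₁ x‖ ^ 2 + ‖V₂ x‖ ^ 2)) = 0 := by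
  have hA := V₁.integral_conj_mul_schrodinger (W := fun x ↦ 3 * Q x ^ 2) (C := 6)
    (continuous_const.mul (continuous_Q.pow 2))
    (fun x ↦ by rw [abs_of_nonneg (by positivity)]; linarith [Q_sq_le_two x]) (ε ^ 2)
  have hB := V₂.integral_conj_mul_schrodinger (W := fun x ↦ Q x ^ 2) (C := 2) (continuous_Q.pow 2)
    (fun x ↦ by rw [abs_of_nonneg (by positivity)]; exact Q_sq_le_two x) (ε ^ 2)
  set A : ℝ := (∫ x, (‖deriv V₁ x‖ ^ 2 + ‖V₁ x‖ ^ 2 - 3 * Q x ^ 2 * ‖V₁ x‖ ^ 2))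
    + ε ^ 2 * ∫ x, ‖V₁ x‖ ^ 2
  set B : ℝ := (∫ x, (‖deriv V₂ x‖ ^ 2 + ‖V₂ x‖ ^ 2 - Q x ^ 2 * ‖V₂ x‖ ^ 2))
    + ε ^ 2 * ∫ x, ‖V₂ x‖ ^ 2
  set p := ∫ x, conj (V₂ x) * V₁ x
  have hσp : σ * p = B := by
    rw [← hB, ← integral_const_mul]
    congr 1 with x
    push_cast
    linear_combination conj (V₂ x) * h₁ x
  have hσp' : σ * conj p = -A := by
    rw [← hA, ← integral_neg, ← integral_conj, ← integral_const_mul]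
    congr 1 with x
    rw [map_mul, Complex.conj_conj]
    push_cast
    linear_combination conj (V₁ x) * h₂ x
  rw [integral_add V₁.integrable_norm_sq V₂.integrable_norm_sq]
  linear_combination Complex.re_mul_add_eq_zero_of_mul_eq_ofReal hσp hσp'
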